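/- arXiv:1712.01706 — 8 statements merged into one kernel-verified Lean document; each statement's English description precedes it below -/
import Mathlib

section
/- If ∑xₙ is absolutely convergent with all xₙ ≠ 0, then the achievement set A(xₙ) = {∑_{n∈A} xₙ : A ⊆ ℕ} is a compact perfect subset of ℝ. -/
/-!
The achievement set is the image of the Cantor space `ℕ → Bool` under `b ↦ ∑' n, [b n] xₙ`,
which is continuous by the Weierstrass M-test with majorant `‖xₙ‖`; hence it is compact.
Adding or removing a single index `n` moves a subsum by exactly `xₙ`, which is nonzero and
tends to `0`, so no point of the achievement set is isolated.
-/

open Filter Topology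

section Monoid

variable {M : Type*} [AddCommMonoid M] [TopologicalSpace M]

def achievementSet (x : ℕ → M) : Set M :=
  {y | ∃ A : Set ℕ, y = ∑' n, A.indicator x n}

theorem achievementSet_eq_range (x : ℕ → M) :
    achievementSet x = Set.range fun b : ℕ → Bool => ∑' n, {m | b m}.indicator x n := by
  classical
  ext y
  constructor
  · rintro ⟨A, rfl⟩
    exact ⟨fun n => decide (n ∈ A), by simp⟩
  · rintro ⟨b, rfl⟩
    exact ⟨_, rfl⟩

end Monoid

section Normed

variable {E : Type*} [NormedAddCommGroup E] [CompleteSpace E]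

theorem isCompact_achievementSet {x : ℕ → E} (hx : Summable (‖x ·‖)) :
    IsCompact (achievementSet x) := by
  rw [achievementSet_eq_range]
  refine isCompact_range <|
    continuous_tsum (fun n => ?_) hx fun n b => norm_indicator_le_norm_self _ _
  have hcoord : Continuous fun b : ℕ → Bool => if b n then x n else 0 :=
    (continuous_of_discreteTopology (f := fun v : Bool => if v then x n else 0)).comp
      (continuous_apply n)
  exact hcoord.congr fun b => by simp [Set.indicator_apply]

theorem tsum_indicator_insert {x : ℕ → E} (hx : Summable x) {A : Set ℕ}
    {n : ℕ} (hn : n ∉ A) :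
    ∑' m, (insert n A).indicator x m = x n + ∑' m, A.indicator x m := by
  classical
  rw [Set.insert_eq, Set.indicator_union_of_disjoint (Set.disjoint_singleton_left.mpr hn),
    Summable.tsum_add (hx.indicator _) (hx.indicator _), Set.indicator_singleton, tsum_pi_single]

theorem exists_mem_achievementSet_norm_sub_eq {x : ℕ → E} (hx : Summable x)
    {y : E} (hy : y ∈ achievementSet x) (n : ℕ) :
    ∃ z ∈ achievementSet x, ‖z - y‖ = ‖x n‖ := by
  obtain ⟨A, rfl⟩ := hy
  by_cases hn : n ∈ A
  · refine ⟨_, ⟨A \ {n}, rfl⟩, ?_⟩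
    have hsplit := tsum_indicator_insert hx (A := A \ {n}) (n := n) (by simp)
    rw [Set.insert_sdiff_singleton, Set.insert_eq_of_mem hn] at hsplit
    rw [hsplit, sub_add_cancel_right, norm_neg]
  · refine ⟨_, ⟨insert n A, rfl⟩, ?_⟩
    rw [tsum_indicator_insert hx hn, add_sub_cancel_right]

theorem preperfect_achievementSet {x : ℕ → E} (hx : Summable x)
    (hne : ∀ n, x n ≠ 0) : Preperfect (achievementSet x) := by
  intro y hy
  choose z hz hzy using exists_mem_achievementSet_norm_sub_eq hx hy
  have hzy_ne (n : ℕ) : z n ≠ y := fun h =>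
    hne n (norm_eq_zero.mp (by rw [← hzy n, h, sub_self, norm_zero]))
  have hlim : Tendsto z atTop (𝓝 y) :=
    tendsto_iff_norm_sub_tendsto_zero.mpr <| by
      simpa only [hzy, Function.comp_def] using tendsto_norm_zero.comp hx.tendsto_atTop_zero
  rw [accPt_iff_frequently]
  exact hlim.frequently (Frequently.of_forall fun n => ⟨hzy_ne n, hz n⟩)

end Normed

/-- If `∑ xₙ` is absolutely convergent with all `xₙ ≠ 0`, then the achievement set
`A(xₙ) = {∑_{n∈A} xₙ : A ⊆ ℕ}` is a compact perfect subset of `ℝ`. -/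
theorem achievement_set_compact_perfect (x : ℕ → ℝ)
    (habs : Summable fun n => |x n|) (hne : ∀ n, x n ≠ 0) :
    IsCompact {y : ℝ | ∃ A : Set ℕ, y = ∑' n, A.indicator x n} ∧
      Perfect {y : ℝ | ∃ A : Set ℕ, y = ∑' n, A.indicator x n} := by
  have hcompact : IsCompact (achievementSet x) := isCompact_achievementSet habs
  exact ⟨hcompact, hcompact.isClosed, preperfect_achievementSet habs.of_abs hne⟩
end

section
/- No ideal I on ℕ containing all finite sets is a Gδ subset of the Cantor space {0,1}^ℕ (identifying sets with their characteristic functions). -/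
open Classical in
private lemma isGδ_preimage {X Y : Type*} [TopologicalSpace X] [TopologicalSpace Y]
    {s : Set Y} (hs : IsGδ s) {f : X → Y} (hf : Continuous f) : IsGδ (f ⁻¹' s) := by
  obtain ⟨T, hT, hTc, rfl⟩ := hs
  rw [Set.preimage_sInter]
  exact IsGδ.biInter hTc fun t ht => ((hT t ht).preimage hf).isGδ

open Classical in
/-- No ideal on `ℕ` containing all finite sets is a `Gδ` subset of the Cantor space
`{0,1}^ℕ` (identifying sets with their characteristic functions). -/
theorem ideal_not_Gdelta (I : Set (Set ℕ))
    (hdown : ∀ A ∈ I, ∀ B ⊆ A, B ∈ I)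
    (hunion : ∀ A ∈ I, ∀ B ∈ I, A ∪ B ∈ I)
    (hproper : (Set.univ : Set ℕ) ∉ I)
    (hfin : ∀ A : Set ℕ, A.Finite → A ∈ I) :
    ¬ IsGδ ((fun A : Set ℕ => fun n => if n ∈ A then true else false) '' I :
      Set (ℕ → Bool)) := by
  intro hGδ
  set χ : Set ℕ → (ℕ → Bool) := fun A => fun n => if n ∈ A then true else false with hχ
  set S : Set (ℕ → Bool) := χ '' I with hS
  -- S is dense
  have hdense : Dense S := by
    rw [dense_iff_inter_open]
    intro U hU ⟨f, hf⟩
    obtain ⟨F, u, hu, hsub⟩ := isOpen_pi_iff.mp hU f hf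
    set A : Set ℕ := {n | n ∈ F ∧ f n = true} with hA
    refine ⟨χ A, ?_, ⟨A, hfin A ((F.finite_toSet).subset fun n hn => hn.1), rfl⟩⟩
    apply hsub
    intro n hn
    have : χ A n = f n := by
      simp only [χ, hA, Set.mem_setOf_eq]
      by_cases h : f n = true
      · exact (if_pos ⟨hn, h⟩).trans h.symm
      · simp only [Bool.not_eq_true] at h
        simp only [h]
        exact if_neg (fun hh => by simp [h] at hh)
    rw [this]
    exact (hu n hn).2
  have hres : S ∈ residual (ℕ → Bool) := residual_of_dense_Gδ hGδ hdense
  -- complement map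
  set c : (ℕ → Bool) → (ℕ → Bool) := fun f n => !(f n) with hc
  have hcc : Continuous c := continuous_pi fun n => (continuous_of_discreteTopology (f := fun b : Bool => !b)).comp (continuous_apply n)
  have hco : IsOpenMap c := by
    have hinv : Function.Involutive c := fun f => by funext n; simp [c]
    exact (Homeomorph.mk ⟨c, c, fun f => hinv f, fun f => hinv f⟩ hcc hcc).isOpenMap
  have hdense' : Dense (c ⁻¹' S) := hdense.preimage hco
  have hres' : c ⁻¹' S ∈ residual (ℕ → Bool) :=
    residual_of_dense_Gδ (isGδ_preimage hGδ hcc) hdense'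
  have hne : (S ∩ c ⁻¹' S).Nonempty := by
    have := dense_of_mem_residual (Filter.inter_mem hres hres')
    exact this.nonempty
  obtain ⟨f, ⟨A, hAI, hAf⟩, ⟨B, hBI, hBf⟩⟩ := hne
  have hAB : B = Aᶜ := by
    ext n
    have h1 : (if n ∈ B then true else false) = !(if n ∈ A then true else false) := by
      have := congrFun hBf n
      rw [← hAf] at this
      exact this
    by_cases hA : n ∈ A <;> by_cases hB : n ∈ B <;> simp [hA, hB] at h1 ⊢
  exact hproper (by simpa [hAB, Set.union_compl_self] using hunion A hAI B hBI)
end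

section
/- An ideal I on ℕ (containing Fin) with the Baire property is meager in {0,1}^ℕ, and consequently no maximal ideal has the Baire property. -/
/-!
If `S ⊆ {0,1}^ℕ` is invariant under finite modifications and has the Baire property, then `S` is
meagre or comeagre: if `S` is comeagre in some basic cylinder `C`, then, since changing finitely
many coordinates is a homeomorphism preserving `S`, it is comeagre in each of the countably many
cylinders with the same support, hence everywhere. The image of an ideal `I` containing `Fin` is
such a set. It cannot be comeagre: complementation is a homeomorphism mapping it onto the image
of the dual filter, which is disjoint from it, and two comeagre sets meet in a Baire space.
For a maximal ideal these two images cover `{0,1}^ℕ`, so they cannot both be meagre either.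
-/

open Filter Set Topology

namespace Homeomorph

variable {ι α : Type*} [TopologicalSpace α] [DiscreteTopology α] [DecidableEq α]

def piSwap (x y : ι → α) : (ι → α) ≃ₜ (ι → α) :=
  piCongrRight fun i => (Equiv.swap (x i) (y i)).toHomeomorphOfDiscrete

theorem piSwap_apply (x y z : ι → α) (i : ι) :
    piSwap x y z i = Equiv.swap (x i) (y i) (z i) :=
  rfl

theorem piSwap_eventuallyEq {x y : ι → α} (h : x =ᶠ[cofinite] y) (z : ι → α) :
    piSwap x y z =ᶠ[cofinite] z := by
  filter_upwards [h] with i hi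
  rw [piSwap_apply, hi, Equiv.swap_self, Equiv.refl_apply]

def piBoolNot : (ι → Bool) ≃ₜ (ι → Bool) :=
  piCongrRight fun _ => Equiv.boolNot.toHomeomorphOfDiscrete

theorem setOf_piBoolNot_eq_true (x : ι → Bool) :
    {i | piBoolNot x i = true} = {i | x i = true}ᶜ := by
  ext i
  change (!x i) = true ↔ ¬x i = true
  simp

end Homeomorph

section ZeroOneLaw

variable {ι α : Type*} [TopologicalSpace α]

theorem BaireMeasurableSet.exists_pi_diff_isMeagre {S : Set (ι → α)}
    (hBP : BaireMeasurableSet S) (hS : ¬IsMeagre S) :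
    ∃ (x : ι → α) (F : Finset ι), IsMeagre ((F : Set ι).pi (fun i => {x i}) \ S) := by
  obtain ⟨U, hU, hSU⟩ := hBP.residualEq_isOpen
  replace hSU := eventuallyEq_set.1 hSU
  have hUS : IsMeagre (U \ S) := by
    filter_upwards [hSU] with x hx ⟨hxU, hxS⟩
    exact hxS (hx.2 hxU)
  obtain ⟨x, hx⟩ : U.Nonempty := by
    refine nonempty_iff_ne_empty.2 fun hU₀ => hS ?_
    filter_upwards [hSU] with x hx hxS
    exact (hU₀ ▸ hx.1 hxS : x ∈ (∅ : Set (ι → α)))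
  obtain ⟨F, u, hu, hFU⟩ := isOpen_pi_iff.1 hU x hx
  have hcyl : (F : Set ι).pi (fun i => {x i}) ⊆ U :=
    (Set.pi_mono fun i hi => singleton_subset_iff.2 (hu i hi).2).trans hFU
  exact ⟨x, F, hUS.mono (sdiff_subset_sdiff_left hcyl)⟩

theorem isMeagre_compl_of_isMeagre_pi_diff [DiscreteTopology α] [Countable α]
    {S : Set (ι → α)} (hS : ∀ x y : ι → α, x =ᶠ[cofinite] y → x ∈ S → y ∈ S)
    {x : ι → α} {F : Finset ι} (hF : IsMeagre ((F : Set ι).pi (fun i => {x i}) \ S)) :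
    IsMeagre Sᶜ := by
  classical
  let extend (σ : F → α) : ι → α := fun i => if h : i ∈ F then σ ⟨i, h⟩ else x i
  have extend_eventuallyEq (σ : F → α) : extend σ =ᶠ[cofinite] x :=
    eventually_cofinite.2 <| F.finite_toSet.subset fun i hi => by_contra fun h => hi (dif_neg h)
  -- `piSwap (extend σ) x` maps the cylinder of `extend σ` over `F` onto that of `x`.
  let e (σ : F → α) := Homeomorph.piSwap (extend σ) x
  refine (isMeagre_iUnion fun σ =>
    hF.preimage_of_isOpenMap (e σ).continuous (e σ).isOpenMap).mono ?_
  intro y hy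
  refine mem_iUnion.2 ⟨fun i => y i, fun i hi => ?_, fun hyS => ?_⟩
  · simp [e, Homeomorph.piSwap_apply, extend, Finset.mem_coe.1 hi]
  · exact hy (hS _ y (Homeomorph.piSwap_eventuallyEq (extend_eventuallyEq fun i => y i) y) hyS)

theorem BaireMeasurableSet.isMeagre_or_isMeagre_compl [DiscreteTopology α] [Countable α]
    {S : Set (ι → α)} (hBP : BaireMeasurableSet S)
    (hS : ∀ x y : ι → α, x =ᶠ[cofinite] y → x ∈ S → y ∈ S) :
    IsMeagre S ∨ IsMeagre Sᶜ :=
  or_iff_not_imp_left.2 fun hS' =>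
    let ⟨_, _, hF⟩ := hBP.exists_pi_diff_isMeagre hS'
    isMeagre_compl_of_isMeagre_pi_diff hS hF

end ZeroOneLaw

section Baire

variable {X : Type*} [TopologicalSpace X] [BaireSpace X] [Nonempty X]

theorem not_isMeagre_compl_of_disjoint_preimage (e : X ≃ₜ X) {s : Set X}
    (h : Disjoint s (e ⁻¹' s)) : ¬IsMeagre sᶜ := fun hs => by
  have hs' : s ∈ residual X := compl_compl s ▸ hs
  have hs_inter : s ∩ e ⁻¹' s ∈ residual X :=
    inter_mem hs' (tendsto_residual_of_isOpenMap e.continuous e.isOpenMap hs')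
  exact not_isMeagre_of_mem_residual hs_inter (h.inter_eq ▸ IsMeagre.empty)

theorem not_isMeagre_of_union_preimage_eq_univ (e : X ≃ₜ X) {s : Set X}
    (h : s ∪ e ⁻¹' s = univ) : ¬IsMeagre s := fun hs =>
  not_isMeagre_of_mem_residual univ_mem
    (h ▸ hs.union (hs.preimage_of_isOpenMap e.continuous e.isOpenMap))

end Baire

section Ideal

variable {ι : Type*}

open Classical in
theorem image_ite_mem_eq_setOf (I : Set (Set ι)) :
    (fun A : Set ι => fun n => if n ∈ A then true else false) '' I =
      {x | {n | x n = true} ∈ I} := by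
  ext x
  constructor
  · rintro ⟨A, hA, rfl⟩
    simpa using hA
  · intro hx
    exact ⟨_, hx, funext fun n => by by_cases h : x n = true <;> simp [h]⟩

theorem setOf_eq_true_mem_of_eventuallyEq {I : Set (Set ι)}
    (hdown : ∀ A ∈ I, ∀ B ⊆ A, B ∈ I) (hunion : ∀ A ∈ I, ∀ B ∈ I, A ∪ B ∈ I)
    (hfin : ∀ A : Set ι, A.Finite → A ∈ I)
    {x y : ι → Bool} (hxy : x =ᶠ[cofinite] y) (hx : {i | x i = true} ∈ I) :
    {i | y i = true} ∈ I := by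
  refine hdown _ (hunion _ hx _ (hfin _ (eventually_cofinite.1 hxy))) _ fun i hi => ?_
  by_cases hxi : x i = true
  · exact Or.inl hxi
  · exact Or.inr fun h => hxi (h.trans hi)

end Ideal

open Classical in
/-- An ideal on `ℕ` (containing `Fin`) with the Baire property is meager in `{0,1}^ℕ`,
and consequently no maximal ideal has the Baire property. -/
theorem ideal_baire_property_meager (I : Set (Set ℕ))
    (hdown : ∀ A ∈ I, ∀ B ⊆ A, B ∈ I)
    (hunion : ∀ A ∈ I, ∀ B ∈ I, A ∪ B ∈ I)
    (hproper : (Set.univ : Set ℕ) ∉ I)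
    (hfin : ∀ A : Set ℕ, A.Finite → A ∈ I) :
    (BaireMeasurableSet ((fun A : Set ℕ => fun n => if n ∈ A then true else false) '' I :
        Set (ℕ → Bool)) →
      IsMeagre ((fun A : Set ℕ => fun n => if n ∈ A then true else false) '' I :
        Set (ℕ → Bool))) ∧
    ((∀ A : Set ℕ, A ∈ I ∨ Aᶜ ∈ I) →
      ¬ BaireMeasurableSet ((fun A : Set ℕ => fun n => if n ∈ A then true else false) '' I :
        Set (ℕ → Bool))) := by
  rw [image_ite_mem_eq_setOf]
  set S : Set (ℕ → Bool) := {x | {n | x n = true} ∈ I}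
  have hpreimage : Homeomorph.piBoolNot ⁻¹' S = {x | {n | x n = true}ᶜ ∈ I} := by
    ext x
    simp [S, Homeomorph.setOf_piBoolNot_eq_true]
  have hmeagre (hBP : BaireMeasurableSet S) : IsMeagre S := by
    refine (hBP.isMeagre_or_isMeagre_compl fun x y hxy =>
      setOf_eq_true_mem_of_eventuallyEq hdown hunion hfin hxy).resolve_right ?_
    refine not_isMeagre_compl_of_disjoint_preimage Homeomorph.piBoolNot ?_
    rw [hpreimage, Set.disjoint_left]
    exact fun x hx hx' => hproper (Set.union_compl_self {n | x n = true} ▸ hunion _ hx _ hx')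
  refine ⟨hmeagre, fun hmax hBP => ?_⟩
  refine not_isMeagre_of_union_preimage_eq_univ Homeomorph.piBoolNot ?_ (hmeagre hBP)
  rw [hpreimage]
  exact Set.eq_univ_of_forall fun x => hmax {n | x n = true}
end

section
/- If ∑xₙ is conditionally convergent, then for the ideal I generated by the even numbers and finite sets applied to the interleaved sequence x_{2n-1} = (-1)ⁿ/n, x_{2n} = 1/2ⁿ, the ideal achievement set A_I(xₙ) = {∑_{n∈A} xₙ : A ∈ I} equals ℝ, while every A ∈ I gives an absolutely convergent subseries ∑_{n∈A} xₙ. -/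
/-!
The odd-indexed terms are the alternating harmonic series: its positive terms `1/(2j+2)` and
its negative terms `-1/(2j+1)` are at most `1` in size and have divergent sums, so a finite
block of one of them brings any `r` to a finite sum `s` with `r - s ∈ [0, 1]`. The even-indexed
terms `2⁻ᵐ` then produce `r - s` as a subseries, by its binary expansion. Absolute convergence
holds because a set in the ideal is a set of even indices up to finitely many, and the even
terms form a geometric series.
-/

open Filter Finset

/-- The interleaved sequence `x_{2m-1} = (-1)^m/m`, `x_{2m} = 1/2^m` (indices from 1;
index 0 is unused and set to 0). -/
noncomputable def interleavedSeq : ℕ → ℝ := fun n =>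
  if n = 0 then 0
  else if n % 2 = 1 then ((-1 : ℝ)) ^ ((n + 1) / 2) / ((n + 1) / 2 : ℕ)
  else (1 : ℝ) / 2 ^ (n / 2)

theorem hasSum_indicator_image_iff {M β γ : Type*} [AddCommMonoid M] [TopologicalSpace M]
    {g : γ → β} (hg : Function.Injective g) {S : Set γ} {f : β → M} {a : M} :
    HasSum ((g '' S).indicator f) a ↔ HasSum (S.indicator (f ∘ g)) a := by
  rw [← hg.hasSum_iff fun n hn =>
    Set.indicator_of_notMem (fun h => hn (Set.image_subset_range g S h)) f]
  simp only [Function.comp_def, Set.indicator_image hg]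

theorem summable_indicator_of_diff_finite {α : Type*} {g : α → ℝ} {A E : Set α} (hg : 0 ≤ g)
    (hE : Summable (E.indicator g)) (hA : (A \ E).Finite) : Summable (A.indicator g) := by
  have hAE : Summable ((A \ E).indicator g) := summable_subtype_iff_indicator.mp (hA.summable g)
  refine .of_nonneg_of_le (Set.indicator_nonneg fun a _ => hg a) (fun a => ?_) (hE.add hAE)
  calc A.indicator g a ≤ (E ∪ A \ E).indicator g a :=
        Set.indicator_le_indicator_of_subset (by simp) hg a
    _ = _ := by rw [Set.indicator_union_of_disjoint Set.disjoint_sdiff_right]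

theorem exists_hasSum_indicator_inv_two_pow_succ {t : ℝ} (ht : t ∈ Set.Icc 0 1) :
    ∃ S : Set ℕ, HasSum (S.indicator fun i => ((2 : ℝ) ^ (i + 1))⁻¹) t := by
  obtain ⟨d, -, rfl⟩ := Real.ofDigits_SurjOn one_lt_two ht
  refine ⟨{i | d i = 1}, ?_⟩
  convert (Real.summable_ofDigitsTerm (digits := d)).hasSum using 1
  funext i
  rcases Fin.exists_fin_two.mp ⟨d i, rfl⟩ with h | h <;> simp [Real.ofDigitsTerm, h]
  rfl

theorem exists_sum_range_le_lt_add_one {a : ℕ → ℝ} (ha : ∀ j, a j ≤ 1)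
    (htop : Tendsto (fun k => ∑ j ∈ range k, a j) atTop atTop) {r : ℝ} (hr : 0 ≤ r) :
    ∃ k, ∑ j ∈ range k, a j ≤ r ∧ r < ∑ j ∈ range k, a j + 1 := by
  classical
  have hex : ∃ k, r < ∑ j ∈ range k, a j := (htop.eventually (eventually_gt_atTop r)).exists
  obtain ⟨k, hk⟩ : ∃ k, Nat.find hex = k + 1 :=
    Nat.exists_eq_succ_of_ne_zero fun h => by
      have h0 := Nat.find_spec hex
      rw [h, sum_range_zero] at h0
      linarith
  have hlt := Nat.find_spec hex
  rw [hk, sum_range_succ] at hlt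
  exact ⟨k, not_lt.mp (Nat.find_min hex (by omega)), by linarith [ha k]⟩

theorem tendsto_sum_range_inv_two_mul_add_two :
    Tendsto (fun k => ∑ j ∈ range k, (2 * (j : ℝ) + 2)⁻¹) atTop atTop := by
  convert Real.tendsto_sum_range_one_div_nat_succ_atTop.const_mul_atTop (one_half_pos (α := ℝ))
    using 2 with k
  rw [mul_sum]
  refine sum_congr rfl fun j _ => ?_
  field_simp

theorem tendsto_sum_range_inv_two_mul_add_one :
    Tendsto (fun k => ∑ j ∈ range k, (2 * (j : ℝ) + 1)⁻¹) atTop atTop :=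
  tendsto_atTop_mono (fun _ => sum_le_sum fun j _ => by gcongr; norm_num)
    tendsto_sum_range_inv_two_mul_add_two

theorem two_mul_add_two_injective : Function.Injective fun i : ℕ => 2 * i + 2 :=
  fun a b h => by simp only at h; omega

theorem interleavedSeq_zero : interleavedSeq 0 = 0 := rfl

theorem interleavedSeq_two_mul_add_two (i : ℕ) :
    interleavedSeq (2 * i + 2) = ((2 : ℝ) ^ (i + 1))⁻¹ := by
  simp [interleavedSeq, show (2 * i + 2) / 2 = i + 1 by omega]

theorem interleavedSeq_four_mul_add_one (j : ℕ) :
    interleavedSeq (4 * j + 1) = -(2 * (j : ℝ) + 1)⁻¹ := by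
  simp only [interleavedSeq, if_neg (show 4 * j + 1 ≠ 0 by omega),
    if_pos (show (4 * j + 1) % 2 = 1 by omega), show (4 * j + 1 + 1) / 2 = 2 * j + 1 by omega]
  push_cast
  rw [pow_succ, pow_mul]
  norm_num
  ring

theorem interleavedSeq_four_mul_add_three (j : ℕ) :
    interleavedSeq (4 * j + 3) = (2 * (j : ℝ) + 2)⁻¹ := by
  simp only [interleavedSeq, if_neg (show 4 * j + 3 ≠ 0 by omega),
    if_pos (show (4 * j + 3) % 2 = 1 by omega), show (4 * j + 3 + 1) / 2 = 2 * j + 2 by omega]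
  push_cast
  rw [show 2 * j + 2 = 2 * (j + 1) by ring, pow_mul]
  norm_num

theorem summable_indicator_even_abs_interleavedSeq :
    Summable ({n : ℕ | n % 2 = 0}.indicator fun n => |interleavedSeq n|) := by
  refine (two_mul_add_two_injective.summable_iff fun n hn => ?_).mp ?_
  · rcases Nat.even_or_odd' n with ⟨m, rfl | rfl⟩
    · obtain rfl : m = 0 := by by_contra h; exact hn ⟨m - 1, by simp only; omega⟩
      simp [interleavedSeq_zero]
    · exact Set.indicator_of_notMem (by simp) _
  · have hval : ∀ i, ({n : ℕ | n % 2 = 0}.indicator (fun n => |interleavedSeq n|) ∘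
        fun i => 2 * i + 2) i = (1 / 2) ^ i / 2 := fun i => by
      rw [Function.comp_apply, Set.indicator_of_mem (by simp),
        interleavedSeq_two_mul_add_two, abs_of_pos (by positivity), pow_succ, mul_inv, one_div,
        inv_pow, div_eq_mul_inv]
    exact (summable_geometric_two.div_const 2).congr fun i => (hval i).symm

theorem exists_subset_even_hasSum_indicator_interleavedSeq {t : ℝ} (ht : t ∈ Set.Icc 0 1) :
    ∃ E ⊆ {n : ℕ | n % 2 = 0}, HasSum (E.indicator interleavedSeq) t := by
  obtain ⟨S, hS⟩ := exists_hasSum_indicator_inv_two_pow_succ ht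
  refine ⟨(fun i => 2 * i + 2) '' S, by rintro _ ⟨i, -, rfl⟩; simp, ?_⟩
  rw [hasSum_indicator_image_iff two_mul_add_two_injective]
  simpa only [Function.comp_def, interleavedSeq_two_mul_add_two] using hS

theorem exists_finset_odd_sub_sum_interleavedSeq_mem_Icc (r : ℝ) :
    ∃ F : Finset ℕ, (∀ n ∈ F, n % 2 = 1) ∧ r - ∑ n ∈ F, interleavedSeq n ∈ Set.Icc 0 1 := by
  rcases le_or_gt 0 r with hr | hr
  · obtain ⟨k, hle, hlt⟩ := exists_sum_range_le_lt_add_one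
      (fun j => inv_le_one_of_one_le₀ (by linarith [j.cast_nonneg (α := ℝ)]))
      tendsto_sum_range_inv_two_mul_add_two hr
    refine ⟨(range k).image (4 * · + 3), by simp; omega, ?_⟩
    rw [sum_image (by intro a _ b _ h; simp only at h; omega)]
    simp only [interleavedSeq_four_mul_add_three]
    constructor <;> linarith
  · obtain ⟨k, hle, hlt⟩ := exists_sum_range_le_lt_add_one
      (fun j => inv_le_one_of_one_le₀ (by linarith [j.cast_nonneg (α := ℝ)]))
      tendsto_sum_range_inv_two_mul_add_one (r := 1 - r) (by linarith)
    refine ⟨(range k).image (4 * · + 1), by simp; omega, ?_⟩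
    rw [sum_image (by intro a _ b _ h; simp only at h; omega)]
    simp only [interleavedSeq_four_mul_add_one, sum_neg_distrib]
    constructor <;> linarith

/-- For the interleaved sequence and the ideal `I` generated by the even numbers and the
finite sets, every `A ∈ I` gives an absolutely convergent subseries, yet
`A_I(xₙ) = {∑_{n∈A} xₙ : A ∈ I} = ℝ`. -/
theorem ideal_achievement_eq_real_on_even_ideal :
    (∀ A ∈ {A : Set ℕ | (A \ {n : ℕ | n % 2 = 0}).Finite},
        Summable fun n => |Set.indicator A interleavedSeq n|) ∧
      {r : ℝ | ∃ A ∈ {A : Set ℕ | (A \ {n : ℕ | n % 2 = 0}).Finite},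
          HasSum (Set.indicator A interleavedSeq) r} = Set.univ := by
  refine ⟨fun A hA => ?_, Set.eq_univ_of_forall fun r => ?_⟩
  · refine (summable_indicator_of_diff_finite (fun n => abs_nonneg _)
      summable_indicator_even_abs_interleavedSeq hA).congr fun n => ?_
    by_cases hn : n ∈ A <;> simp [hn]
  · obtain ⟨F, hF_odd, hF⟩ := exists_finset_odd_sub_sum_interleavedSeq_mem_Icc r
    obtain ⟨E, hE_even, hE⟩ := exists_subset_even_hasSum_indicator_interleavedSeq hF
    have hdisj : Disjoint (F : Set ℕ) E := Set.disjoint_left.mpr fun n hnF hnE => by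
      have h_odd := hF_odd n hnF
      have h_even : n % 2 = 0 := hE_even hnE
      omega
    refine ⟨F ∪ E, F.finite_toSet.subset fun n ⟨hn, hn_odd⟩ => ?_, ?_⟩
    · exact hn.resolve_right fun h => hn_odd (hE_even h)
    · rw [Set.indicator_union_of_disjoint hdisj]
      convert (hasSum_subtype_iff_indicator.mp (F.hasSum interleavedSeq)).add hE
      ring
end

section
/- For xₙ = (-1)ⁿ/n and the summable ideal I = {A ⊆ ℕ : ∑_{n∈A} 1/n < ∞}, one has A_I(xₙ) = ℝ, yet no W ∈ I makes ∑_{n∈W} xₙ conditionally convergent. -/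
open Filter Set

lemma greedy {f : ℕ → ℝ} (hf0 : ∀ n, 0 ≤ f n)
    (hlim : Tendsto f atTop (nhds 0))
    (hdiv : ¬ Summable f) {r : ℝ} (hr : 0 ≤ r) :
    ∃ S : Set ℕ, HasSum (S.indicator f) r := by
  set ρ : ℕ → ℝ := fun n => Nat.rec r (fun n ρn => if f n ≤ ρn then ρn - f n else ρn) n with hρ
  have hstep : ∀ n, ρ (n+1) = if f n ≤ ρ n then ρ n - f n else ρ n := fun n => rfl
  have hnn : ∀ n, 0 ≤ ρ n := by
    intro n; induction n with
    | zero => exact hr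
    | succ n ih =>
      rw [hstep]; split
      · linarith
      · exact ih
  have hanti : Antitone ρ := by
    refine antitone_nat_of_succ_le fun n => ?_
    rw [hstep]; split
    · have := hf0 n; linarith
    · exact le_rfl
  set S : Set ℕ := {n | f n ≤ ρ n} with hS
  have hind : ∀ n, S.indicator f n = ρ n - ρ (n+1) := by
    intro n
    rw [hstep, Set.indicator_apply]
    by_cases h : f n ≤ ρ n
    · simp [hS, h]
    · simp [hS, h]
  have hpart : ∀ n, ∑ i ∈ Finset.range n, S.indicator f i = r - ρ n := by
    intro n; induction n with
    | zero => simp [hρ]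
    | succ n ih => rw [Finset.sum_range_succ, ih, hind]; ring
  -- ρ tends to its infimum
  have hbdd : BddBelow (Set.range ρ) := ⟨0, by rintro x ⟨n, rfl⟩; exact hnn n⟩
  have htend : Tendsto ρ atTop (nhds (⨅ n, ρ n)) := tendsto_atTop_ciInf hanti hbdd
  set L := ⨅ n, ρ n with hL
  have hLnn : 0 ≤ L := le_ciInf hnn
  have hL0 : L = 0 := by
    by_contra h
    have hLpos : 0 < L := lt_of_le_of_ne hLnn (Ne.symm h)
    have hev : ∀ᶠ n in atTop, f n < L := hlim.eventually (gt_mem_nhds hLpos)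
    obtain ⟨N, hN⟩ := hev.exists_forall_of_atTop
    have hmem : ∀ n ≥ N, S.indicator f n = f n := by
      intro n hn
      have : f n ≤ ρ n := le_trans (hN n hn).le (ciInf_le hbdd n)
      simp [hS, Set.indicator_apply, this]
    have hsum : Summable (S.indicator f) := by
      refine ⟨r - L, ?_⟩
      rw [hasSum_iff_tendsto_nat_of_nonneg (fun i => Set.indicator_apply_nonneg (fun _ => hf0 i))]
      simp_rw [hpart]
      exact tendsto_const_nhds.sub htend
    apply hdiv
    rw [← summable_nat_add_iff N]
    have := ((summable_nat_add_iff N).mpr hsum)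
    exact this.congr (fun n => hmem (n + N) (Nat.le_add_left N n))
  refine ⟨S, ?_⟩
  rw [hasSum_iff_tendsto_nat_of_nonneg (fun i => Set.indicator_apply_nonneg (fun _ => hf0 i))]
  simp_rw [hpart]
  have : Tendsto (fun n => r - ρ n) atTop (nhds (r - L)) := tendsto_const_nhds.sub htend
  rwa [hL0, sub_zero] at this

lemma one_div_lim : Tendsto (fun n : ℕ => (1 : ℝ) / n) atTop (nhds 0) :=
  tendsto_one_div_atTop_nhds_zero_nat

lemma indicator_lim (E : Set ℕ) :
    Tendsto (fun n => E.indicator (fun n : ℕ => (1 : ℝ) / n) n) atTop (nhds 0) := by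
  refine squeeze_zero (fun n => Set.indicator_apply_nonneg (fun _ => by positivity)) ?_ one_div_lim
  intro n
  refine Set.indicator_le_self' (fun x _ => by positivity) n |>.trans le_rfl

-- main achievability for a residue class
lemma achieve (k : ZMod 2) {r : ℝ} (hr : 0 ≤ r) :
    ∃ S : Set ℕ, S ⊆ {n : ℕ | (n : ZMod 2) = k} ∧
      HasSum (S.indicator (fun n : ℕ => (1 : ℝ) / n)) r := by
  set E : Set ℕ := {n : ℕ | (n : ZMod 2) = k}
  obtain ⟨S, hS⟩ := greedy (f := E.indicator (fun n : ℕ => (1 : ℝ) / n))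
    (fun n => Set.indicator_apply_nonneg (fun _ => by positivity))
    (indicator_lim E) (Real.not_summable_indicator_one_div_natCast two_ne_zero k) hr
  refine ⟨S ∩ E, inter_subset_right, ?_⟩
  have : (S ∩ E).indicator (fun n : ℕ => (1 : ℝ) / n) = S.indicator (E.indicator fun n : ℕ => (1 : ℝ) / n) := by
    rw [Set.indicator_indicator]
  rw [this]
  exact hS

/-- For `xₙ = (-1)ⁿ/n` and the summable ideal `I = {A : ∑_{n∈A} 1/n < ∞}`, one has
`A_I(xₙ) = ℝ`, yet no `W ∈ I` makes `∑_{n∈W} xₙ` conditionally convergent. -/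
theorem summable_ideal_achievement_eq_real :
    ({r : ℝ | ∃ A ∈ {A : Set ℕ | Summable fun n => Set.indicator A (fun n : ℕ => (1 : ℝ) / n) n},
        HasSum (Set.indicator A (fun n : ℕ => (-1 : ℝ) ^ n / n)) r} = Set.univ) ∧
      ¬ ∃ W ∈ {A : Set ℕ | Summable fun n => Set.indicator A (fun n : ℕ => (1 : ℝ) / n) n},
          (Summable (Set.indicator W (fun n : ℕ => (-1 : ℝ) ^ n / n)) ∧
            ¬ Summable fun n => |Set.indicator W (fun n : ℕ => (-1 : ℝ) ^ n / n) n|) := by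
  constructor
  · rw [Set.eq_univ_iff_forall]
    intro r
    rcases le_or_gt 0 r with hr | hr
    · obtain ⟨S, hSE, hS⟩ := achieve 0 hr
      refine ⟨S, hS.summable, ?_⟩
      have he : ∀ n ∈ S, ((-1 : ℝ)) ^ n / n = 1 / n := by
        intro n hn
        have h2 : Even n := by
          have := hSE hn
          simp only [Set.mem_setOf_eq] at this
          have hv := ZMod.val_natCast (n := 2) n
          rw [this] at hv
          exact Nat.even_iff.mpr hv.symm
        rw [h2.neg_one_pow]
      rw [Set.indicator_congr he]
      exact hS
    · obtain ⟨S, hSE, hS⟩ := achieve 1 (by linarith : (0:ℝ) ≤ -r)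
      refine ⟨S, hS.summable, ?_⟩
      have he : ∀ n ∈ S, ((-1 : ℝ)) ^ n / n = -(1 / n) := by
        intro n hn
        have h2 : Odd n := by
          have := hSE hn
          simp only [Set.mem_setOf_eq] at this
          have hv := ZMod.val_natCast (n := 2) n
          rw [this] at hv
          exact Nat.odd_iff.mpr hv.symm
        rw [h2.neg_one_pow, neg_div]
      have h1 : S.indicator (fun n : ℕ => (-1 : ℝ) ^ n / n) =
          S.indicator (fun n : ℕ => -((1 : ℝ) / n)) := Set.indicator_congr he
      have h2 : S.indicator (fun n : ℕ => -((1 : ℝ) / n)) =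
          fun n => -(S.indicator (fun n : ℕ => (1 : ℝ) / n) n) := by
        funext n; by_cases hn : n ∈ S <;> simp [hn]
      rw [h1, h2]
      simpa using hS.neg
  · rintro ⟨W, hW, _, habs⟩
    apply habs
    refine hW.congr fun n => ?_
    by_cases hn : n ∈ W
    · simp only [Set.indicator_of_mem hn]
      rw [abs_div, abs_pow, abs_neg, abs_one, one_pow, Nat.abs_cast]
    · simp [Set.indicator_of_notMem hn]
end

section
/- There exists a divergent series ∑xₙ of positive terms with xₙ → 0 such that every subseries with non-increasing terms converges. (Example: xₙ listing the harmonic series in blocks 1/2; 1/4,1/3; 1/8,...,1/5; 1/16,...,1/9; ... with each block in decreasing-index order.) -/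
private noncomputable def xf (m : ℕ) : ℝ :=
  ((m : ℝ) + 2 ^ Nat.log 2 m) / 4 ^ (Nat.log 2 m + 1)

private lemma xf_pos (m : ℕ) : 0 < xf m := by
  unfold xf; positivity

private lemma four_pow (j : ℕ) : (4 : ℝ) ^ (j + 1) = 2 ^ j * (2 ^ j * 4) := by
  rw [show (4:ℝ) = 2 ^ 2 by norm_num, ← pow_mul]
  rw [show 2 * (j+1) = j + (j + 2) by ring, pow_add]
  ring

private lemma xf_lt (m : ℕ) : xf m < (1/2 : ℝ) ^ Nat.log 2 m := by
  set j := Nat.log 2 m with hj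
  have hm : (m : ℝ) < 2 ^ (j + 1) := by
    exact_mod_cast Nat.lt_pow_succ_log_self (by norm_num) m
  unfold xf
  rw [div_lt_iff₀ (by positivity), four_pow, one_div, inv_pow, ← mul_assoc,
    inv_mul_cancel₀ (by positivity), one_mul]
  have h2 : (2:ℝ) ^ (j+1) = 2 ^ j * 2 := by ring
  nlinarith [pow_pos (show (0:ℝ) < 2 by norm_num) j]

private lemma xf_ge (m : ℕ) (hm : m ≠ 0) : 1 / (2 * (m : ℝ)) ≤ xf m := by
  set j := Nat.log 2 m with hj
  have h1 : (2 : ℝ) ^ j ≤ m := by exact_mod_cast Nat.pow_log_le_self 2 hm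
  have hmpos : (0:ℝ) < m := by positivity
  unfold xf
  rw [div_le_div_iff₀ (by positivity) (by positivity), four_pow]
  nlinarith [pow_pos (show (0:ℝ) < 2 by norm_num) j]


open Filter in
/-- There exists a divergent series `∑ xₙ` of positive terms with `xₙ → 0` such that
every subseries with non-increasing terms converges. -/
theorem exists_divergent_all_monotone_subseries_convergent :
    ∃ x : ℕ → ℝ, (∀ n, 0 < x n) ∧ Tendsto x atTop (nhds 0) ∧ ¬ Summable x ∧
      ∀ k : ℕ → ℕ, StrictMono k → (∀ n, x (k (n + 1)) ≤ x (k n)) →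
        Summable fun n => x (k n) := by
  refine ⟨xf, xf_pos, ?_, ?_, ?_⟩
  · -- tendsto 0
    have hlog : Tendsto (fun m => Nat.log 2 m) atTop atTop := by
      rw [tendsto_atTop_atTop]
      intro b
      exact ⟨2 ^ b, fun m hm => Nat.le_log_of_pow_le (by norm_num) hm⟩
    have hgeo : Tendsto (fun m : ℕ => (1/2 : ℝ) ^ Nat.log 2 m) atTop (nhds 0) :=
      (tendsto_pow_atTop_nhds_zero_of_lt_one (by norm_num) (by norm_num)).comp hlog
    exact squeeze_zero (fun m => (xf_pos m).le) (fun m => (xf_lt m).le) hgeo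
  · -- not summable
    intro hs
    have h1 : Summable (fun m : ℕ => 1 / (2 * (m : ℝ))) := by
      refine hs.of_nonneg_of_le (fun m => by positivity) (fun m => ?_)
      rcases eq_or_ne m 0 with rfl | hm
      · simpa using (xf_pos 0).le
      · exact xf_ge m hm
    have h2 : Summable (fun m : ℕ => 1 / (m : ℝ)) := by
      refine (h1.mul_left 2).congr fun m => ?_
      rcases eq_or_ne m 0 with rfl | hm
      · simp
      · have : (m:ℝ) ≠ 0 := Nat.cast_ne_zero.mpr hm
        field_simp
    exact Real.not_summable_one_div_natCast h2
  · intro k hk hmono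
    have hLs : StrictMono (fun n => Nat.log 2 (k n)) := by
      apply strictMono_nat_of_lt_succ
      intro n
      have hle : Nat.log 2 (k n) ≤ Nat.log 2 (k (n+1)) :=
        Nat.log_mono_right (hk (Nat.lt_succ_self n)).le
      rcases lt_or_eq_of_le hle with h | h
      · exact h
      · exfalso
        have hx : xf (k n) < xf (k (n+1)) := by
          unfold xf
          rw [← h]
          gcongr
          exact_mod_cast hk (Nat.lt_succ_self n)
        exact absurd (hmono n) (not_le.mpr hx)
    have hbound : ∀ n, xf (k n) ≤ (1/2 : ℝ) ^ n := by
      intro n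
      have h1 : n ≤ Nat.log 2 (k n) := hLs.le_apply
      calc xf (k n) ≤ (1/2:ℝ) ^ Nat.log 2 (k n) := (xf_lt _).le
        _ ≤ (1/2:ℝ) ^ n := pow_le_pow_of_le_one (by norm_num) (by norm_num) h1
    refine Summable.of_nonneg_of_le (fun n => (xf_pos _).le) hbound ?_
    exact summable_geometric_of_lt_one (by norm_num) (by norm_num)
end

section
/- Let I be an ideal strictly containing Fin and (xₙ) ∈ ℓ₁ with all xₙ ≠ 0. Then A_{Fin}(xₙ) is countable while A_I(xₙ) is uncountable; in particular A_{Fin}(xₙ) ⊊ A_I(xₙ). -/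
/-!
Finite subsets of `ℕ` are countably many, so `A_Fin` is countable. An infinite `A ∈ I` contains
a sequence `m` along which `|x (m (n+1))| < |x (m n)| / 2`; every term of `y = x ∘ m` then
exceeds the sum of the absolute values of all later ones, so distinct `S ⊆ ℕ` have distinct
sums `∑_{n ∈ S} yₙ`. These sums lie in `A_I` because `m '' S ⊆ A`, and `Set ℕ` is uncountable.
-/

open Filter Set Topology

theorem countable_setOf_finite_hasSum_indicator {α β : Type*} [Countable α] [AddCommMonoid β]
    [TopologicalSpace β] [T2Space β] (f : α → β) :
    {r : β | ∃ A : Set α, A.Finite ∧ HasSum (A.indicator f) r}.Countable := by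
  refine (Countable.ofPred_finite.image fun A : Set α => ∑' n, A.indicator f n).mono ?_
  rintro r ⟨A, hA, hr⟩
  exact ⟨A, hA, hr.tsum_eq⟩

theorem exists_seq_mem_two_mul_abs_lt {α : Type*} {x : α → ℝ} (hx : Tendsto x cofinite (𝓝 0))
    {A : Set α} (hA : A.Infinite) (hne : ∀ a ∈ A, x a ≠ 0) :
    ∃ m : ℕ → α, (∀ n, m n ∈ A) ∧ ∀ n, 2 * |x (m (n + 1))| < |x (m n)| := by
  have step : ∀ a : A, ∃ b : A, 2 * |x b| < |x a| := by
    intro a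
    have hsmall : ∀ᶠ b in cofinite, |x b| < |x a| / 2 := by
      refine (tendsto_zero_iff_abs_tendsto_zero x).1 hx |>.eventually_lt_const ?_
      exact half_pos (abs_pos.2 (hne a a.2))
    obtain ⟨b, hbA, hb⟩ := (hA.sdiff hsmall).nonempty
    exact ⟨⟨b, hbA⟩, by linarith [show |x b| < |x a| / 2 by simpa using hb]⟩
  choose f hf using step
  obtain ⟨a₀⟩ := hA.nonempty.to_subtype
  exact ⟨fun n => f^[n] a₀, fun n => (f^[n] a₀).2,
    fun n => by simpa only [Function.iterate_succ_apply'] using hf _⟩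

section Lacunary

variable {y : ℕ → ℝ} (hy : ∀ n, 2 * |y (n + 1)| < |y n|)
include hy

theorem strictAnti_abs_of_two_mul_abs_lt : StrictAnti fun n => |y n| :=
  strictAnti_nat_of_succ_lt fun n => by linarith [hy n, abs_nonneg (y (n + 1))]

theorem ne_zero_of_two_mul_abs_lt (n : ℕ) : y n ≠ 0 :=
  abs_pos.1 <| by linarith [hy n, abs_nonneg (y (n + 1))]

theorem abs_add_le_half_pow_mul_of_two_mul_abs_lt (n k : ℕ) :
    |y (k + n)| ≤ (1 / 2) ^ k * |y n| := by
  induction k with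
  | zero => simp
  | succ k ih =>
    rw [add_right_comm, pow_succ]
    linarith [hy (k + n)]

theorem summable_abs_of_two_mul_abs_lt : Summable fun n => |y n| :=
  .of_nonneg_of_le (fun _ => abs_nonneg _)
    (fun k => abs_add_le_half_pow_mul_of_two_mul_abs_lt hy 0 k)
    (summable_geometric_two.mul_right _)

theorem tsum_abs_add_lt_of_two_mul_abs_lt (n : ℕ) : ∑' k, |y (k + (n + 1))| < |y n| :=
  calc ∑' k, |y (k + (n + 1))| ≤ ∑' k : ℕ, (1 / 2) ^ k * |y (n + 1)| :=
        ((summable_nat_add_iff (n + 1)).2 (summable_abs_of_two_mul_abs_lt hy)).tsum_le_tsum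
          (abs_add_le_half_pow_mul_of_two_mul_abs_lt hy (n + 1))
          (summable_geometric_two.mul_right _)
    _ = 2 * |y (n + 1)| := by rw [tsum_mul_right, tsum_geometric_two]
    _ < |y n| := hy n

/-- Here `d n = εₙ yₙ` with `εₙ ∈ {-1, 0, 1}`; a first nonzero term could not be cancelled by
the tail. -/
theorem eq_zero_of_tsum_eq_zero_of_two_mul_abs_lt {d : ℕ → ℝ}
    (hd : ∀ n, d n = 0 ∨ |d n| = |y n|) (hsum : ∑' n, d n = 0) (n : ℕ) : d n = 0 := by
  induction n using Nat.strong_induction_on with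
  | _ n ih =>
  refine (hd n).resolve_right fun hdn => ?_
  have hle : ∀ k, |d k| ≤ |y k| := fun k => (hd k).elim (fun h => by simp [h]) le_of_eq
  have hds : Summable d := .of_norm_bounded (summable_abs_of_two_mul_abs_lt hy) hle
  have htail : d n + ∑' k, d (k + (n + 1)) = 0 := by
    rw [← hsum, ← hds.sum_add_tsum_nat_add (n + 1), Finset.sum_range_succ,
      Finset.sum_eq_zero fun k hk => ih k (Finset.mem_range.1 hk), zero_add]
  have htail_summable : Summable fun k => ‖d (k + (n + 1))‖ :=
    (summable_nat_add_iff (f := fun k => ‖d k‖) (n + 1)).2 hds.norm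
  have : |y n| ≤ ∑' k, |y (k + (n + 1))| :=
    calc |y n| = ‖∑' k, d (k + (n + 1))‖ := by
          rw [← hdn, eq_neg_of_add_eq_zero_left htail, Real.norm_eq_abs, abs_neg]
      _ ≤ ∑' k, ‖d (k + (n + 1))‖ := norm_tsum_le_tsum_norm htail_summable
      _ ≤ ∑' k, |y (k + (n + 1))| :=
          htail_summable.tsum_le_tsum (fun k => hle _)
            ((summable_nat_add_iff (f := fun k => |y k|) (n + 1)).2
              (summable_abs_of_two_mul_abs_lt hy))
  linarith [tsum_abs_add_lt_of_two_mul_abs_lt hy n]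

theorem injective_tsum_indicator_of_two_mul_abs_lt :
    Function.Injective fun S : Set ℕ => ∑' n, S.indicator y n := by
  intro S T hST
  have hs : Summable y := (summable_abs_of_two_mul_abs_lt hy).of_abs
  have hd : ∀ n, S.indicator y n - T.indicator y n = 0 ∨
      |S.indicator y n - T.indicator y n| = |y n| := by
    intro n
    by_cases hS : n ∈ S <;> by_cases hT : n ∈ T <;> simp [hS, hT]
  have hsum : ∑' n, (S.indicator y n - T.indicator y n) = 0 := by
    rw [(hs.indicator S).tsum_sub (hs.indicator T)]
    exact sub_eq_zero.2 hST
  ext n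
  have := eq_zero_of_tsum_eq_zero_of_two_mul_abs_lt hy hd hsum n
  by_cases hS : n ∈ S <;> by_cases hT : n ∈ T <;>
    simp_all [ne_zero_of_two_mul_abs_lt hy n]

end Lacunary

theorem not_countable_setOf_subset_hasSum_indicator {α : Type*} {x : α → ℝ}
    (hx : Tendsto x cofinite (𝓝 0)) {A : Set α} (hA : A.Infinite) (hne : ∀ a ∈ A, x a ≠ 0) :
    ¬ {r : ℝ | ∃ B ⊆ A, HasSum (B.indicator x) r}.Countable := by
  intro hcount
  obtain ⟨m, hmA, hm⟩ := exists_seq_mem_two_mul_abs_lt hx hA hne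
  have hminj : Function.Injective m :=
    .of_comp (f := fun a => |x a|) (strictAnti_abs_of_two_mul_abs_lt hm).injective
  have hsum : Summable (x ∘ m) := (summable_abs_of_two_mul_abs_lt hm).of_abs
  have hmaps : MapsTo (fun S : Set ℕ => ∑' n, S.indicator (x ∘ m) n) univ
      {r | ∃ B ⊆ A, HasSum (B.indicator x) r} := by
    intro S _
    refine ⟨m '' S, image_subset_iff.2 fun n _ => hmA n, ?_⟩
    refine (hminj.hasSum_iff fun a ha => indicator_of_notMem ?_ x).1 ?_
    · exact fun ⟨n, _, hn⟩ => ha ⟨n, hn⟩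
    · have : (m '' S).indicator x ∘ m = S.indicator (x ∘ m) :=
        funext fun n => indicator_image hminj
      exact this ▸ (hsum.indicator S).hasSum
  have : Countable (Set ℕ) := countable_univ_iff.1 <|
    hmaps.countable_of_injOn (injective_tsum_indicator_of_two_mul_abs_lt hm).injOn hcount
  obtain ⟨f, hf⟩ := exists_injective_nat (Set ℕ)
  exact Function.cantor_injective f hf

theorem fin_achievement_strict_subset_general (x : ℕ → ℝ)
    (habs : Summable fun n => |x n|) (hne : ∀ n, x n ≠ 0)
    (I : Set (Set ℕ))
    (hdown : ∀ A ∈ I, ∀ B ⊆ A, B ∈ I)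
    (hfin : ∀ A : Set ℕ, A.Finite → A ∈ I)
    (hstrict : ∃ A ∈ I, A.Infinite) :
    {r : ℝ | ∃ A : Set ℕ, A.Finite ∧ HasSum (Set.indicator A x) r}.Countable ∧
      ¬ {r : ℝ | ∃ A ∈ I, HasSum (Set.indicator A x) r}.Countable ∧
      {r : ℝ | ∃ A : Set ℕ, A.Finite ∧ HasSum (Set.indicator A x) r} ⊂
        {r : ℝ | ∃ A ∈ I, HasSum (Set.indicator A x) r} := by
  obtain ⟨A, hAI, hA⟩ := hstrict
  have hcount := countable_setOf_finite_hasSum_indicator x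
  have huncount : ¬ {r : ℝ | ∃ A ∈ I, HasSum (Set.indicator A x) r}.Countable := by
    refine fun h => not_countable_setOf_subset_hasSum_indicator
      habs.of_abs.tendsto_cofinite_zero hA (fun a _ => hne a) (h.mono ?_)
    rintro r ⟨B, hBA, hB⟩
    exact ⟨B, hdown A hAI B hBA, hB⟩
  refine ⟨hcount, huncount, ssubset_of_subset_of_ne ?_ fun h => huncount (h ▸ hcount)⟩
  rintro r ⟨B, hB, hr⟩
  exact ⟨B, hfin B hB, hr⟩

/-- Let `I` be an ideal strictly containing `Fin` and `(xₙ) ∈ ℓ₁` with all `xₙ ≠ 0`.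
Then `A_Fin(xₙ)` is countable while `A_I(xₙ)` is uncountable; in particular
`A_Fin(xₙ) ⊊ A_I(xₙ)`. -/
theorem fin_achievement_strict_subset (x : ℕ → ℝ)
    (habs : Summable fun n => |x n|) (hne : ∀ n, x n ≠ 0)
    (I : Set (Set ℕ))
    (hdown : ∀ A ∈ I, ∀ B ⊆ A, B ∈ I)
    (hunion : ∀ A ∈ I, ∀ B ∈ I, A ∪ B ∈ I)
    (hproper : (Set.univ : Set ℕ) ∉ I)
    (hfin : ∀ A : Set ℕ, A.Finite → A ∈ I)
    (hstrict : ∃ A ∈ I, A.Infinite) :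
    {r : ℝ | ∃ A : Set ℕ, A.Finite ∧ HasSum (Set.indicator A x) r}.Countable ∧
      ¬ {r : ℝ | ∃ A ∈ I, HasSum (Set.indicator A x) r}.Countable ∧
      {r : ℝ | ∃ A : Set ℕ, A.Finite ∧ HasSum (Set.indicator A x) r} ⊂
        {r : ℝ | ∃ A ∈ I, HasSum (Set.indicator A x) r} :=
  fin_achievement_strict_subset_general x habs hne I hdown hfin hstrict
end

section
/- Let I be any ideal on ℕ and (xₙ) ∈ ℓ₁ with all xₙ ≠ 0. Then A_I(xₙ) is a proper subset of A(xₙ): at least one of ∑_{xₙ>0} xₙ and ∑_{xₙ<0} xₙ lies in A(xₙ) ∖ A_I(xₙ). -/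
private lemma ind_summable (x : ℕ → ℝ) (habs : Summable fun n => |x n|) (A : Set ℕ) :
    Summable (Set.indicator A x) := by
  apply Summable.of_abs
  apply habs.of_nonneg_of_le (fun n => abs_nonneg _)
  intro n
  by_cases h : n ∈ A <;> simp [Set.indicator, h, abs_nonneg]

private lemma unique_max (x : ℕ → ℝ) (habs : Summable fun n => |x n|) (hne : ∀ n, x n ≠ 0)
    (A : Set ℕ) (h : HasSum (Set.indicator A x) (∑' n, Set.indicator {n : ℕ | 0 < x n} x n)) :
    A = {n : ℕ | 0 < x n} := by
  set P : Set ℕ := {n : ℕ | 0 < x n}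
  have hsA : Summable (Set.indicator A x) := ind_summable x habs A
  have hsP : Summable (Set.indicator P x) := ind_summable x habs P
  have hle : ∀ n, Set.indicator A x n ≤ Set.indicator P x n := by
    intro n
    by_cases hp : 0 < x n
    · by_cases ha : n ∈ A <;> simp [Set.indicator, Set.mem_setOf_eq, P, hp, ha, hp.le]
    · have hneg : x n < 0 := lt_of_le_of_ne (not_lt.mp hp) (hne n)
      by_cases ha : n ∈ A <;> simp [Set.indicator, ha, hp, hneg.le, Set.mem_setOf_eq, P]
  have heq : ∀ n, Set.indicator A x n = Set.indicator P x n := by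
    intro n
    by_contra hcon
    have hlt : Set.indicator A x n < Set.indicator P x n := lt_of_le_of_ne (hle n) hcon
    have := Summable.tsum_lt_tsum hle hlt hsA hsP
    rw [h.tsum_eq] at this
    exact lt_irrefl _ this
  ext n
  have := heq n
  by_cases hp : 0 < x n
  · simp only [Set.indicator, Set.mem_setOf_eq, P, hp, if_true] at this
    constructor
    · intro _; exact hp
    · intro _
      by_contra ha
      simp [ha] at this
      exact hne n this.symm
  · have hneg : x n < 0 := lt_of_le_of_ne (not_lt.mp hp) (hne n)
    simp only [Set.indicator, Set.mem_setOf_eq, P, hp, if_false] at this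
    constructor
    · intro ha
      simp [ha] at this
      exact absurd this (hne n)
    · intro hx; exact absurd hx hp

private lemma unique_min (x : ℕ → ℝ) (habs : Summable fun n => |x n|) (hne : ∀ n, x n ≠ 0)
    (A : Set ℕ) (h : HasSum (Set.indicator A x) (∑' n, Set.indicator {n : ℕ | x n < 0} x n)) :
    A = {n : ℕ | x n < 0} := by
  set N : Set ℕ := {n : ℕ | x n < 0}
  have hsA : Summable (Set.indicator A x) := ind_summable x habs A
  have hsN : Summable (Set.indicator N x) := ind_summable x habs N
  have hle : ∀ n, Set.indicator N x n ≤ Set.indicator A x n := by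
    intro n
    by_cases hp : x n < 0
    · by_cases ha : n ∈ A <;> simp [Set.indicator, Set.mem_setOf_eq, N, hp, ha, hp.le]
    · have hpos : 0 < x n := lt_of_le_of_ne (not_lt.mp hp) (Ne.symm (hne n))
      by_cases ha : n ∈ A <;> simp [Set.indicator, ha, hp, hpos.le, Set.mem_setOf_eq, N]
  have heq : ∀ n, Set.indicator A x n = Set.indicator N x n := by
    intro n
    by_contra hcon
    have hlt : Set.indicator N x n < Set.indicator A x n :=
      lt_of_le_of_ne (hle n) (Ne.symm hcon)
    have := Summable.tsum_lt_tsum hle hlt hsN hsA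
    rw [h.tsum_eq] at this
    exact lt_irrefl _ this
  ext n
  have := heq n
  by_cases hp : x n < 0
  · simp only [Set.indicator, Set.mem_setOf_eq, N, hp, if_true] at this
    constructor
    · intro _; exact hp
    · intro _
      by_contra ha
      simp [ha] at this
      exact hne n this.symm
  · have hpos : 0 < x n := lt_of_le_of_ne (not_lt.mp hp) (Ne.symm (hne n))
    simp only [Set.indicator, Set.mem_setOf_eq, N, hp, if_false] at this
    constructor
    · intro ha
      simp [ha] at this
      exact absurd this (hne n)
    · intro hx; exact absurd hx hp

/-- Let `I` be an ideal on `ℕ` and `(xₙ) ∈ ℓ₁` with all `xₙ ≠ 0`. Then `A_I(xₙ)` is a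
proper subset of `A(xₙ)`: at least one of `∑_{xₙ>0} xₙ` and `∑_{xₙ<0} xₙ` lies in
`A(xₙ) ∖ A_I(xₙ)`. -/
theorem ideal_achievement_proper_subset (x : ℕ → ℝ)
    (habs : Summable fun n => |x n|) (hne : ∀ n, x n ≠ 0)
    (I : Set (Set ℕ))
    (hdown : ∀ A ∈ I, ∀ B ⊆ A, B ∈ I)
    (hunion : ∀ A ∈ I, ∀ B ∈ I, A ∪ B ∈ I)
    (hproper : (Set.univ : Set ℕ) ∉ I)
    (hfin : ∀ A : Set ℕ, A.Finite → A ∈ I) :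
    {r : ℝ | ∃ A ∈ I, HasSum (Set.indicator A x) r} ⊂
        {r : ℝ | ∃ A : Set ℕ, HasSum (Set.indicator A x) r} ∧
      ((∑' n, Set.indicator {n : ℕ | 0 < x n} x n) ∈
          {r : ℝ | ∃ A : Set ℕ, HasSum (Set.indicator A x) r} \
            {r : ℝ | ∃ A ∈ I, HasSum (Set.indicator A x) r} ∨
        (∑' n, Set.indicator {n : ℕ | x n < 0} x n) ∈
          {r : ℝ | ∃ A : Set ℕ, HasSum (Set.indicator A x) r} \
            {r : ℝ | ∃ A ∈ I, HasSum (Set.indicator A x) r}) := by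
  set P : Set ℕ := {n : ℕ | 0 < x n}
  set N : Set ℕ := {n : ℕ | x n < 0}
  have hPN : P ∪ N = Set.univ := by
    ext n
    simp only [Set.mem_union, Set.mem_setOf_eq, Set.mem_univ, iff_true, P, N]
    rcases lt_or_gt_of_ne (hne n) with h | h
    · exact Or.inr h
    · exact Or.inl h
  have hnotboth : P ∉ I ∨ N ∉ I := by
    by_contra hcon
    push_neg at hcon
    have := hunion P hcon.1 N hcon.2
    rw [hPN] at this
    exact hproper this
  have key : ∀ S : Set ℕ, S ∉ I →
      (∀ A : Set ℕ, HasSum (Set.indicator A x) (∑' n, Set.indicator S x n) → A = S) →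
      (∑' n, Set.indicator S x n) ∈
        {r : ℝ | ∃ A : Set ℕ, HasSum (Set.indicator A x) r} \
          {r : ℝ | ∃ A ∈ I, HasSum (Set.indicator A x) r} := by
    intro S hS huniq
    constructor
    · exact ⟨S, (ind_summable x habs S).hasSum⟩
    · rintro ⟨A, hAI, hA⟩
      rw [huniq A hA] at hAI
      exact hS hAI
  have hmain : (∑' n, Set.indicator P x n) ∈
        {r : ℝ | ∃ A : Set ℕ, HasSum (Set.indicator A x) r} \
          {r : ℝ | ∃ A ∈ I, HasSum (Set.indicator A x) r} ∨
      (∑' n, Set.indicator N x n) ∈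
        {r : ℝ | ∃ A : Set ℕ, HasSum (Set.indicator A x) r} \
          {r : ℝ | ∃ A ∈ I, HasSum (Set.indicator A x) r} := by
    rcases hnotboth with hP | hN
    · exact Or.inl (key P hP (fun A hA => unique_max x habs hne A hA))
    · exact Or.inr (key N hN (fun A hA => unique_min x habs hne A hA))
  refine ⟨?_, hmain⟩
  constructor
  · rintro r ⟨A, _, hA⟩
    exact ⟨A, hA⟩
  · intro hsub
    rcases hmain with h | h
    · exact h.2 (hsub h.1)
    · exact h.2 (hsub h.1)
end
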